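/- With the Yule model setup, Var(τ^{(n)}) = ((n+1)/(n-1)) H_{n,2} − (2(n+1)/(n-1)^2) H_{n,1}^2 + (4(n+1)/(n-1)^2) H_{n,1} − 4/(n-1) − 4/(n-1)^2, and consequently Var(τ^{(n)}) → π²/6 as n → ∞. -/

import Mathlib

/-!
Given `κ = k`, the coalescent time is a sum of independent `Exp(i)` variables, `k < i ≤ n`, so
its first two moments are tail sums of `1/i` and `1/i²`. Since `κ` is independent of the `T i`,
the moments of `τ⁽ⁿ⁾` are the mixtures of these over the law of `κ`; the weights
`1/((k+1)(k+2)) = 1/(k+1) - 1/(k+2)` telescope, which gives by induction on `n`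
`E τ = ((n+1) H_{n,1} - 2n)/(n-1)` and `E τ² = ((n+1)(H_{n,2} + H_{n,1}² - 4 H_{n,1}) + 4n)/(n-1)`.
The limit follows from `H_{n,1} ≤ 1 + log n` and `H_{n,2} → ζ(2) = π²/6`.
-/

open MeasureTheory ProbabilityTheory Finset Real Filter Topology

lemma integral_pow_mul_exp_neg_mul_Ioi {r : ℝ} (hr : 0 < r) (k : ℕ) :
    ∫ t in Set.Ioi 0, t ^ k * exp (-(r * t)) = k.factorial / r ^ (k + 1) := by
  have h := integral_rpow_mul_exp_neg_mul_Ioi (a := k + 1) (by positivity) hr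
  rw [add_sub_cancel_right, Real.Gamma_nat_eq_factorial, ← Nat.cast_succ, rpow_natCast] at h
  simp_rw [rpow_natCast] at h
  rw [h, Nat.succ_eq_add_one, one_div_pow]
  ring

lemma integrableOn_pow_mul_exp_neg_mul_Ioi {r : ℝ} (hr : 0 < r) (k : ℕ) :
    IntegrableOn (fun t : ℝ => t ^ k * exp (-(r * t))) (Set.Ioi 0) := by
  have hk : (-1 : ℝ) < k := by linarith [k.cast_nonneg (α := ℝ)]
  refine (integrableOn_rpow_mul_exp_neg_mul_rpow hk one_pos hr).congr_fun
    (fun t _ => ?_) measurableSet_Ioi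
  simp [rpow_natCast, neg_mul]

lemma toReal_exponentialPDF_mul_pow {r : ℝ} (hr : 0 < r) (k : ℕ) (x : ℝ) :
    (exponentialPDF r x).toReal * x ^ k
      = (Set.Ici 0).indicator (fun t => r * (t ^ k * exp (-(r * t)))) x := by
  rcases lt_or_ge x 0 with hx | hx
  · simp [exponentialPDF_of_neg hx, hx]
  · rw [exponentialPDF_of_nonneg hx, ENNReal.toReal_ofReal (by positivity),
      Set.indicator_of_mem (Set.mem_Ici.2 hx)]
    ring

lemma expMeasure_eq_withDensity (r : ℝ) :
    expMeasure r = volume.withDensity (exponentialPDF r) := rfl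

lemma measurable_exponentialPDF (r : ℝ) : Measurable (exponentialPDF r) :=
  (measurable_exponentialPDFReal r).ennreal_ofReal

lemma integrable_pow_expMeasure {r : ℝ} (hr : 0 < r) (k : ℕ) :
    Integrable (fun x => x ^ k) (expMeasure r) := by
  rw [expMeasure_eq_withDensity, integrable_withDensity_iff_integrable_smul'
    (measurable_exponentialPDF r) (ae_of_all _ fun _ => ENNReal.ofReal_lt_top)]
  simp_rw [smul_eq_mul, toReal_exponentialPDF_mul_pow hr]
  refine (integrable_indicator_iff measurableSet_Ici).2 ?_
  exact IntegrableOn.congr_set_ae ((integrableOn_pow_mul_exp_neg_mul_Ioi hr k).const_mul r)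
    Ioi_ae_eq_Ici.symm

lemma integral_pow_expMeasure {r : ℝ} (hr : 0 < r) (k : ℕ) :
    ∫ x, x ^ k ∂expMeasure r = k.factorial / r ^ k := by
  rw [expMeasure_eq_withDensity, integral_withDensity_eq_integral_toReal_smul
    (measurable_exponentialPDF r) (ae_of_all _ fun _ => ENNReal.ofReal_lt_top)]
  simp_rw [smul_eq_mul, toReal_exponentialPDF_mul_pow hr, integral_indicator measurableSet_Ici,
    integral_Ici_eq_integral_Ioi, integral_const_mul, integral_pow_mul_exp_neg_mul_Ioi hr]
  field_simp
  ring

lemma memLp_id_two_expMeasure {r : ℝ} (hr : 0 < r) : MemLp id 2 (expMeasure r) :=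
  (memLp_two_iff_integrable_sq aestronglyMeasurable_id).2 (integrable_pow_expMeasure hr 2)

lemma integral_id_expMeasure {r : ℝ} (hr : 0 < r) : ∫ x, x ∂expMeasure r = r⁻¹ := by
  simpa using integral_pow_expMeasure hr 1

lemma variance_id_expMeasure {r : ℝ} (hr : 0 < r) : Var[id; expMeasure r] = (r ^ 2)⁻¹ := by
  have := isProbabilityMeasure_expMeasure hr
  rw [variance_eq_sub (memLp_id_two_expMeasure hr)]
  simp only [id, Pi.pow_apply, integral_pow_expMeasure hr, integral_id_expMeasure hr]
  field_simp
  norm_num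

namespace ProbabilityTheory.HasLaw

variable {Ω : Type*} [MeasurableSpace Ω] {P : Measure Ω} {X : Ω → ℝ} {r : ℝ}

lemma memLp_two_of_expMeasure (hr : 0 < r) (hX : HasLaw X (expMeasure r) P) :
    MemLp X 2 P := by
  have h := memLp_id_two_expMeasure hr
  rw [← hX.map_eq, memLp_map_measure_iff aestronglyMeasurable_id hX.aemeasurable] at h
  exact h

lemma integral_eq_inv_of_expMeasure (hr : 0 < r) (hX : HasLaw X (expMeasure r) P) :
    P[X] = r⁻¹ := by
  rw [hX.integral_eq, integral_id_expMeasure hr]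

lemma variance_eq_inv_sq_of_expMeasure (hr : 0 < r) (hX : HasLaw X (expMeasure r) P) :
    Var[X; P] = (r ^ 2)⁻¹ := by
  rw [hX.variance_eq, variance_id_expMeasure hr]

end ProbabilityTheory.HasLaw

section IndependentSums

variable {Ω ι : Type*} [MeasurableSpace Ω] {P : Measure Ω} [IsProbabilityMeasure P]
  {T : ι → Ω → ℝ} {r : ι → ℝ} {s : Finset ι}

lemma integral_sq_sum_of_iIndepFun (hT : iIndepFun T P) (hs : ∀ i ∈ s, MemLp (T i) 2 P) :
    ∫ ω, (∑ i ∈ s, T i ω) ^ 2 ∂P = ∑ i ∈ s, Var[T i; P] + (∑ i ∈ s, ∫ ω, T i ω ∂P) ^ 2 := by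
  have hvar := IndepFun.variance_sum hs fun i _ j _ hij => hT.indepFun hij
  rw [variance_eq_sub (memLp_finsetSum' s hs)] at hvar
  rw [← hvar, ← integral_finsetSum s fun i hi => (hs i hi).integrable one_le_two]
  simp [Finset.sum_apply]

lemma integral_sum_of_hasLaw_expMeasure (hr : ∀ i ∈ s, 0 < r i)
    (hT : ∀ i ∈ s, HasLaw (T i) (expMeasure (r i)) P) :
    ∫ ω, ∑ i ∈ s, T i ω ∂P = ∑ i ∈ s, (r i)⁻¹ := by
  rw [integral_finsetSum s fun i hi => ((hT i hi).memLp_two_of_expMeasure (hr i hi)).integrable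
    one_le_two]
  exact sum_congr rfl fun i hi => (hT i hi).integral_eq_inv_of_expMeasure (hr i hi)

lemma integral_sq_sum_of_hasLaw_expMeasure (hind : iIndepFun T P) (hr : ∀ i ∈ s, 0 < r i)
    (hT : ∀ i ∈ s, HasLaw (T i) (expMeasure (r i)) P) :
    ∫ ω, (∑ i ∈ s, T i ω) ^ 2 ∂P = ∑ i ∈ s, (r i ^ 2)⁻¹ + (∑ i ∈ s, (r i)⁻¹) ^ 2 := by
  rw [integral_sq_sum_of_iIndepFun hind fun i hi => (hT i hi).memLp_two_of_expMeasure (hr i hi),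
    sum_congr rfl fun i hi => (hT i hi).variance_eq_inv_sq_of_expMeasure (hr i hi),
    sum_congr rfl fun i hi => (hT i hi).integral_eq_inv_of_expMeasure (hr i hi)]

end IndependentSums

lemma sum_indicator_preimage_singleton {Ω ι β : Type*} [AddCommMonoid β] {X : Ω → ι}
    {s : Finset ι} (hs : ∀ ω, X ω ∈ s) (f : ι → Ω → β) (ω : Ω) :
    ∑ k ∈ s, (X ⁻¹' {k}).indicator (f k) ω = f (X ω) ω := by
  classical
  simp [Set.indicator_apply, hs ω]

section Mixture

variable {Ω ι β : Type*} [MeasurableSpace Ω] {P : Measure Ω} [MeasurableSpace ι]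
  [MeasurableSingletonClass ι] {X : Ω → ι} {Y : Ω → β} {s : Finset ι} {f : ι → β → ℝ}

lemma integrable_comp_of_forall_mem_finset (hX : Measurable X) (hs : ∀ ω, X ω ∈ s)
    (hf : ∀ k ∈ s, Integrable (fun ω => f k (Y ω)) P) :
    Integrable (fun ω => f (X ω) (Y ω)) P := by
  simp_rw [← sum_indicator_preimage_singleton hs (fun k ω => f k (Y ω))]
  exact integrable_finsetSum s fun k hk => (hf k hk).indicator (hX (measurableSet_singleton k))

lemma integral_comp_of_indepFun [MeasurableSpace β] [IsProbabilityMeasure P] (hX : Measurable X)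
    (hY : AEMeasurable Y P) (hXY : IndepFun X Y P) (hs : ∀ ω, X ω ∈ s)
    (hfm : ∀ k ∈ s, Measurable (f k)) (hf : ∀ k ∈ s, Integrable (fun ω => f k (Y ω)) P) :
    ∫ ω, f (X ω) (Y ω) ∂P = ∑ k ∈ s, P.real (X ⁻¹' {k}) * ∫ ω, f k (Y ω) ∂P := by
  simp_rw [← sum_indicator_preimage_singleton hs (fun k ω => f k (Y ω))]
  rw [integral_finsetSum s fun k hk => (hf k hk).indicator (hX (measurableSet_singleton k))]
  refine sum_congr rfl fun k hk => ?_
  have h := hXY.integral_fun_comp_mul_comp hX.aemeasurable hY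
    (f := ({k} : Set ι).indicator 1) (g := f k)
    (measurable_one.indicator (measurableSet_singleton k)).aestronglyMeasurable
    (hfm k hk).aestronglyMeasurable
  have hind : ∀ ω, ({k} : Set ι).indicator (1 : ι → ℝ) (X ω) = (X ⁻¹' {k}).indicator 1 ω :=
    fun ω => rfl
  simp_rw [hind, integral_indicator_one (hX (measurableSet_singleton k))] at h
  rw [← h]
  congr 1 with ω
  by_cases hω : ω ∈ X ⁻¹' {k} <;> simp [hω]

end Mixture

section RandomTailSum

variable {Ω : Type*} [MeasurableSpace Ω] {P : Measure Ω} [IsProbabilityMeasure P]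
  {T : ℕ → Ω → ℝ} {κ : Ω → ℕ} {n : ℕ} {c : ℝ} {g : ℝ → ℝ}

lemma integral_comp_sum_Icc_of_indepFun (hT : ∀ i, Measurable (T i)) (hκ : Measurable κ)
    (hind : IndepFun κ (fun ω i => T i ω) P) (hκrange : ∀ ω, κ ω ∈ Ico 1 n)
    (hκlaw : ∀ k ∈ Ico 1 n, P.real (κ ⁻¹' {k}) = c * (((k : ℝ) + 1) * ((k : ℝ) + 2))⁻¹)
    (hg : Measurable g) (hgi : ∀ k, Integrable (fun ω => g (∑ i ∈ Icc (k + 1) n, T i ω)) P) :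
    Integrable (fun ω => g (∑ i ∈ Icc (κ ω + 1) n, T i ω)) P ∧
      ∫ ω, g (∑ i ∈ Icc (κ ω + 1) n, T i ω) ∂P = c * ∑ k ∈ Ico 1 n,
        (((k : ℝ) + 1) * ((k : ℝ) + 2))⁻¹ * ∫ ω, g (∑ i ∈ Icc (k + 1) n, T i ω) ∂P := by
  refine ⟨integrable_comp_of_forall_mem_finset (Y := fun ω i => T i ω)
    (f := fun k y => g (∑ i ∈ Icc (k + 1) n, y i)) hκ hκrange fun k _ => hgi k, ?_⟩
  rw [integral_comp_of_indepFun (f := fun k y => g (∑ i ∈ Icc (k + 1) n, y i)) hκ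
    (measurable_pi_lambda _ hT).aemeasurable hind hκrange
    (fun _ _ => hg.comp (Finset.measurable_sum _ fun i _ => measurable_pi_apply i))
    fun k _ => hgi k, mul_sum]
  exact sum_congr rfl fun k hk => by rw [hκlaw k hk, mul_assoc]

end RandomTailSum

section WeightedTailSums

lemma sum_Ico_inv_add_one_mul_add_two {n : ℕ} (hn : 1 ≤ n) :
    ∑ k ∈ Ico 1 n, (((k : ℝ) + 1) * ((k : ℝ) + 2))⁻¹ = ((n : ℝ) - 1) / (2 * ((n : ℝ) + 1)) := by
  induction n, hn using Nat.le_induction with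
  | base => norm_num
  | succ n hn ih =>
    rw [sum_Ico_succ_top hn, ih]
    push_cast
    field_simp
    ring

lemma sum_Ico_weight_mul_tail_harmonic {n : ℕ} (hn : 1 ≤ n) :
    ∑ k ∈ Ico 1 n, (((k : ℝ) + 1) * ((k : ℝ) + 2))⁻¹ * ∑ i ∈ Icc (k + 1) n, (i : ℝ)⁻¹
      = (∑ i ∈ Icc 1 n, (i : ℝ)⁻¹ + 2 / ((n : ℝ) + 1) - 2) / 2 := by
  induction n, hn using Nat.le_induction with
  | base => norm_num
  | succ n hn ih =>
    have hstep : ∀ k ∈ Ico 1 n,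
        (((k : ℝ) + 1) * ((k : ℝ) + 2))⁻¹ * ∑ i ∈ Icc (k + 1) (n + 1), (i : ℝ)⁻¹
          = (((k : ℝ) + 1) * ((k : ℝ) + 2))⁻¹ * ∑ i ∈ Icc (k + 1) n, (i : ℝ)⁻¹
            + ((n : ℝ) + 1)⁻¹ * (((k : ℝ) + 1) * ((k : ℝ) + 2))⁻¹ := fun k hk => by
      rw [sum_Icc_succ_top (by have := (mem_Ico.1 hk).2; omega)]
      push_cast
      ring
    rw [sum_Ico_succ_top hn, sum_congr rfl hstep, Icc_self, sum_singleton]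
    simp only [sum_add_distrib, ← mul_sum]
    rw [ih, sum_Ico_inv_add_one_mul_add_two hn, sum_Icc_succ_top (by omega)]
    push_cast
    field_simp
    ring

lemma sum_Ico_weight_mul_tail_sq {n : ℕ} (hn : 1 ≤ n) :
    ∑ k ∈ Ico 1 n, (((k : ℝ) + 1) * ((k : ℝ) + 2))⁻¹ *
        (∑ i ∈ Icc (k + 1) n, ((i : ℝ) ^ 2)⁻¹ + (∑ i ∈ Icc (k + 1) n, (i : ℝ)⁻¹) ^ 2)
      = (∑ i ∈ Icc 1 n, ((i : ℝ) ^ 2)⁻¹ + (∑ i ∈ Icc 1 n, (i : ℝ)⁻¹) ^ 2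
          - 4 * ∑ i ∈ Icc 1 n, (i : ℝ)⁻¹) / 2 + 2 * n / ((n : ℝ) + 1) := by
  induction n, hn using Nat.le_induction with
  | base => norm_num
  | succ n hn ih =>
    have hstep : ∀ k ∈ Ico 1 n, (((k : ℝ) + 1) * ((k : ℝ) + 2))⁻¹ *
        (∑ i ∈ Icc (k + 1) (n + 1), ((i : ℝ) ^ 2)⁻¹ + (∑ i ∈ Icc (k + 1) (n + 1), (i : ℝ)⁻¹) ^ 2)
        = (((k : ℝ) + 1) * ((k : ℝ) + 2))⁻¹ *
            (∑ i ∈ Icc (k + 1) n, ((i : ℝ) ^ 2)⁻¹ + (∑ i ∈ Icc (k + 1) n, (i : ℝ)⁻¹) ^ 2)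
          + 2 / ((n : ℝ) + 1) *
              ((((k : ℝ) + 1) * ((k : ℝ) + 2))⁻¹ * ∑ i ∈ Icc (k + 1) n, (i : ℝ)⁻¹)
          + 2 / ((n : ℝ) + 1) ^ 2 * (((k : ℝ) + 1) * ((k : ℝ) + 2))⁻¹ := fun k hk => by
      have hk : k + 1 ≤ n + 1 := by have := (mem_Ico.1 hk).2; omega
      rw [sum_Icc_succ_top hk, sum_Icc_succ_top hk]
      push_cast
      field_simp
      ring
    rw [sum_Ico_succ_top hn, sum_congr rfl hstep, Icc_self, sum_singleton, sum_singleton]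
    simp only [sum_add_distrib, ← mul_sum]
    rw [ih, sum_Ico_weight_mul_tail_harmonic hn, sum_Ico_inv_add_one_mul_add_two hn,
      sum_Icc_succ_top (by omega), sum_Icc_succ_top (by omega)]
    push_cast
    field_simp
    ring

end WeightedTailSums

lemma tendsto_sum_Icc_one_div_sq :
    Tendsto (fun m : ℕ => ∑ i ∈ Icc 1 m, (1 : ℝ) / (i : ℝ) ^ 2) atTop (𝓝 (π ^ 2 / 6)) := by
  refine (hasSum_zeta_two.tendsto_sum_nat.comp (tendsto_add_atTop_nat 1)).congr fun m => ?_
  rw [Function.comp_apply, sum_range_succ', ← Ico_add_one_right_eq_Icc, sum_Ico_eq_sum_range]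
  simp [add_comm]

lemma sum_Icc_one_div_le_one_add_log (m : ℕ) : ∑ i ∈ Icc 1 m, (1 : ℝ) / i ≤ 1 + log m := by
  simpa [harmonic_eq_sum_Icc] using harmonic_le_one_add_log m

lemma tendsto_sum_Icc_one_div_pow_div_sub_one (j : ℕ) :
    Tendsto (fun m : ℕ => (∑ i ∈ Icc 1 m, (1 : ℝ) / i) ^ j / ((m : ℝ) - 1)) atTop (𝓝 0) := by
  have hlog : Tendsto (fun m : ℕ => log (exp 1 * m) ^ j / ((m : ℝ) - 1)) atTop (𝓝 0) := by
    refine ((tendsto_pow_log_div_mul_add_atTop (exp 1)⁻¹ (-1) j (by positivity)).comp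
      (tendsto_natCast_atTop_atTop.const_mul_atTop (exp_pos 1))).congr fun m => ?_
    simp [sub_eq_add_neg]
  refine squeeze_zero' ?_ ?_ hlog
  · filter_upwards [eventually_ge_atTop 1] with m hm
    have : (1 : ℝ) ≤ m := by exact_mod_cast hm
    have : (0 : ℝ) ≤ ∑ i ∈ Icc 1 m, (1 : ℝ) / i := sum_nonneg fun i _ => by positivity
    exact div_nonneg (by positivity) (by linarith)
  · filter_upwards [eventually_ge_atTop 1] with m hm
    have hm : (1 : ℝ) ≤ m := by exact_mod_cast hm
    refine div_le_div_of_nonneg_right (pow_le_pow_left₀ (sum_nonneg fun i _ => by positivity) ?_ j)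
      (by linarith)
    rw [log_mul (exp_ne_zero 1) (by positivity), log_exp]
    exact sum_Icc_one_div_le_one_add_log m

lemma tendsto_variance_coalescent_time_formula :
    Tendsto (fun m : ℕ =>
        ((m : ℝ) + 1) / ((m : ℝ) - 1) * (∑ i ∈ Finset.Icc 1 m, (1 : ℝ) / (i : ℝ) ^ 2)
          - 2 * ((m : ℝ) + 1) / ((m : ℝ) - 1) ^ 2 * (∑ i ∈ Finset.Icc 1 m, (1 : ℝ) / i) ^ 2
          + 4 * ((m : ℝ) + 1) / ((m : ℝ) - 1) ^ 2 * (∑ i ∈ Finset.Icc 1 m, (1 : ℝ) / i)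
          - 4 / ((m : ℝ) - 1) - 4 / ((m : ℝ) - 1) ^ 2)
      atTop (𝓝 (π ^ 2 / 6)) := by
  set u : ℕ → ℝ := fun m => ((m : ℝ) - 1)⁻¹ with hu_def
  have hu : Tendsto u atTop (𝓝 0) :=
    (tendsto_atTop_add_const_right _ (-1) tendsto_natCast_atTop_atTop).inv_tendsto_atTop
  have hc : Tendsto (fun m => 1 + 2 * u m) atTop (𝓝 1) := by
    simpa using (hu.const_mul 2).const_add 1
  have hlim := ((((hc.mul tendsto_sum_Icc_one_div_sq).sub
    ((hc.mul (tendsto_sum_Icc_one_div_pow_div_sub_one 2)).const_mul 2)).add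
    ((hc.mul (tendsto_sum_Icc_one_div_pow_div_sub_one 1)).const_mul 4)).sub
    (hu.const_mul 4)).sub ((hu.pow 2).const_mul 4)
  simp only [mul_zero, one_mul, sub_zero, add_zero, ne_eq, OfNat.ofNat_ne_zero,
    not_false_eq_true, zero_pow] at hlim
  refine hlim.congr' ?_
  filter_upwards [eventually_ge_atTop 2] with m hm
  have hm : (m : ℝ) - 1 ≠ 0 := by
    have : (2 : ℝ) ≤ m := by exact_mod_cast hm
    linarith
  simp only [hu_def, pow_one]
  field_simp
  ring

theorem variance_coalescent_time
    {Ω : Type*} [MeasurableSpace Ω] {P : Measure Ω} [IsProbabilityMeasure P]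
    (n : ℕ) (hn : 2 ≤ n)
    (T : ℕ → Ω → ℝ) (κ : Ω → ℕ)
    (hTmeas : ∀ i, Measurable (T i)) (hκmeas : Measurable κ)
    (hTindep : iIndepFun T P)
    (hTdist : ∀ i ∈ Finset.Icc 1 n, P.map (T i) = expMeasure i)
    (hκrange : ∀ ω, κ ω ∈ Finset.Icc 1 (n - 1))
    (hκdist : ∀ k ∈ Finset.Icc 1 (n - 1),
      P {ω | κ ω = k} =
        ENNReal.ofReal ((2 * ((n : ℝ) + 1) / ((n : ℝ) - 1)) *
          (1 / (((k : ℝ) + 1) * ((k : ℝ) + 2)))))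
    (hindep : IndepFun κ (fun ω i => T i ω) P)
    (H1 H2 : ℝ)
    (hH1 : H1 = ∑ i ∈ Finset.Icc 1 n, (1 : ℝ) / i)
    (hH2 : H2 = ∑ i ∈ Finset.Icc 1 n, (1 : ℝ) / (i : ℝ) ^ 2) :
    (variance (fun ω => ∑ i ∈ Finset.Icc (κ ω + 1) n, T i ω) P =
      ((n : ℝ) + 1) / ((n : ℝ) - 1) * H2
        - 2 * ((n : ℝ) + 1) / ((n : ℝ) - 1) ^ 2 * H1 ^ 2
        + 4 * ((n : ℝ) + 1) / ((n : ℝ) - 1) ^ 2 * H1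
        - 4 / ((n : ℝ) - 1) - 4 / ((n : ℝ) - 1) ^ 2) ∧
    Filter.Tendsto (fun m : ℕ =>
        ((m : ℝ) + 1) / ((m : ℝ) - 1) * (∑ i ∈ Finset.Icc 1 m, (1 : ℝ) / (i : ℝ) ^ 2)
          - 2 * ((m : ℝ) + 1) / ((m : ℝ) - 1) ^ 2 * (∑ i ∈ Finset.Icc 1 m, (1 : ℝ) / i) ^ 2
          + 4 * ((m : ℝ) + 1) / ((m : ℝ) - 1) ^ 2 * (∑ i ∈ Finset.Icc 1 m, (1 : ℝ) / i)
          - 4 / ((m : ℝ) - 1) - 4 / ((m : ℝ) - 1) ^ 2)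
      Filter.atTop (nhds (Real.pi ^ 2 / 6)) := by
  refine ⟨?_, tendsto_variance_coalescent_time_formula⟩
  subst hH1 hH2
  simp only [one_div] at hκdist ⊢
  rw [Icc_sub_one_right_eq_Ico_of_not_isMin (by simpa using (by omega : n ≠ 0))]
    at hκrange hκdist
  have hlaw : ∀ k, ∀ i ∈ Icc (k + 1) n, HasLaw (T i) (expMeasure i) P := fun k i hi =>
    ⟨(hTmeas i).aemeasurable, hTdist i (Icc_subset_Icc (by omega) le_rfl hi)⟩
  have hpos : ∀ k, ∀ i ∈ Icc (k + 1) n, (0 : ℝ) < i := fun k i hi =>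
    Nat.cast_pos.2 (by have := (mem_Icc.1 hi).1; omega)
  have hL2 : ∀ k, MemLp (fun ω => ∑ i ∈ Icc (k + 1) n, T i ω) 2 P := fun k =>
    memLp_finsetSum _ fun i hi => (hlaw k i hi).memLp_two_of_expMeasure (hpos k i hi)
  have hnR : (2 : ℝ) ≤ n := by exact_mod_cast hn
  have hκlaw : ∀ k ∈ Ico 1 n, P.real (κ ⁻¹' {k})
      = 2 * ((n : ℝ) + 1) / ((n : ℝ) - 1) * (((k : ℝ) + 1) * ((k : ℝ) + 2))⁻¹ := fun k hk => by
    rw [measureReal_def, show κ ⁻¹' {k} = {ω | κ ω = k} from rfl, hκdist k hk,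
      ENNReal.toReal_ofReal (mul_nonneg (div_nonneg (by positivity) (by linarith)) (by positivity))]
  obtain ⟨hint, hmean⟩ := integral_comp_sum_Icc_of_indepFun hTmeas hκmeas hindep hκrange hκlaw
    (g := fun x => x) measurable_id fun k => (hL2 k).integrable one_le_two
  obtain ⟨hint2, hsq⟩ := integral_comp_sum_Icc_of_indepFun hTmeas hκmeas hindep hκrange hκlaw
    (g := fun x => x ^ 2) (measurable_id.pow_const 2) fun k => (hL2 k).integrable_sq
  simp only [fun k => integral_sum_of_hasLaw_expMeasure (hpos k) (hlaw k),
    fun k => integral_sq_sum_of_hasLaw_expMeasure hTindep (hpos k) (hlaw k),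
    sum_Ico_weight_mul_tail_harmonic (by omega : 1 ≤ n),
    sum_Ico_weight_mul_tail_sq (by omega : 1 ≤ n)] at hmean hsq
  rw [variance_eq_sub ((memLp_two_iff_integrable_sq hint.aestronglyMeasurable).2 hint2)]
  simp only [Pi.pow_apply]
  rw [hmean, hsq]
  have : (n : ℝ) - 1 ≠ 0 := by linarith
  field_simp
  ring
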